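/- arXiv:1503.02783 — 7 statements merged into one kernel-verified Lean document; each statement's English description precedes it below -/
import Mathlib

section
/- Let k be a commutative ring, A an associative unital k-algebra, λ ∈ k, and let d be a derivation of weight λ on A. Then for all a, b ∈ A and all n ∈ ℕ, the generalized Leibnitz rule holds: dⁿ(a·b) = Σ_{r+s+t=n} (n!/(r!·s!·t!)) · λ^t · d^{r+t}(a) · d^{s+t}(b), where the sum ranges over all triples (r,s,t) of natural numbers with r+s+t = n. -/
/-!
Encode the family `dⁱ a * dʲ b` as a function `F : ℕ × ℕ → A`. The weight-`λ` Leibniz rule says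
that applying `d` pointwise to `F` acts as `E = S₁ + S₂ + λ S₁ S₂`, where `S₁`, `S₂` shift the two
indices. Since pointwise `d` commutes with the shifts, `dⁿ (a * b) = (Eⁿ F) (0, 0)`, and expanding
`Eⁿ` by the binomial theorem twice (the shifts commute) yields the trinomial coefficients.
-/

open Finset
open scoped Nat

theorem Nat.choose_mul_choose_eq_factorial_div (r s t : ℕ) :
    (r + (s + t)).choose r * (s + t).choose s = (r + (s + t))! / (r ! * s ! * t !) := by
  have hr := Nat.add_choose_mul_factorial_mul_factorial (s + t) r
  have hs := Nat.add_choose_mul_factorial_mul_factorial t s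
  rw [add_comm (s + t), add_comm t] at *
  refine (Nat.div_eq_of_eq_mul_left (by positivity) ?_).symm
  rw [← hr, ← hs]
  ring

theorem Commute.add_add_smul_mul_pow {k R : Type*} [CommSemiring k] [Semiring R] [Algebra k R]
    {x y : R} (h : Commute x y) (c : k) (n : ℕ) :
    (x + y + c • (x * y)) ^ n =
      ∑ p ∈ antidiagonal n, ∑ q ∈ antidiagonal p.2,
        (n.choose p.1 * p.2.choose q.1) • c ^ q.2 • (x ^ (p.1 + q.2) * y ^ (q.1 + q.2)) := by
  have hxy : Commute x (y + c • (x * y)) :=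
    h.add_right (((Commute.refl x).mul_right h).smul_right c)
  have hyxy : Commute y (c • (x * y)) := (h.symm.mul_right (Commute.refl y)).smul_right c
  rw [add_assoc, hxy.add_pow']
  refine sum_congr rfl fun p _ => ?_
  rw [hyxy.add_pow', mul_sum, smul_sum]
  refine sum_congr rfl fun q _ => ?_
  have hmonomial :
      x ^ p.1 * (y ^ q.1 * (x ^ q.2 * y ^ q.2)) = x ^ (p.1 + q.2) * y ^ (q.1 + q.2) := by
    rw [(h.pow_pow q.2 q.1).symm.left_comm, pow_add, pow_add, mul_assoc]
  rw [smul_pow, h.mul_pow, mul_smul_comm, mul_smul_comm, mul_smul_comm, hmonomial, mul_smul,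
    smul_comm (p.2.choose q.1)]

theorem Module.End.pow_apply_eq_of_commute {R M : Type*} [Semiring R] [AddCommMonoid M]
    [Module R M] {f g : Module.End R M} (hfg : Commute f g) {x : M} (hx : f x = g x) (n : ℕ) :
    (f ^ n) x = (g ^ n) x := by
  induction n with
  | zero => rfl
  | succ n ih =>
    rw [pow_succ, pow_succ', Module.End.mul_apply, Module.End.mul_apply, hx,
      ← Module.End.mul_apply, (hfg.pow_left n).eq, Module.End.mul_apply, ih]

theorem LinearMap.compLeft_pow_apply {R M I : Type*} [Semiring R] [AddCommMonoid M] [Module R M]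
    (f : M →ₗ[R] M) (n : ℕ) (F : I → M) (i : I) :
    ((f.compLeft I) ^ n) F i = f^[n] (F i) := by
  induction n with
  | zero => rfl
  | succ n ih =>
    rw [pow_succ', Module.End.mul_apply, LinearMap.compLeft_apply, Function.comp_apply, ih,
      Function.iterate_succ_apply']

section Shift

variable (R M : Type*) [Semiring R] [AddCommMonoid M] [Module R M]

def shiftFst : Module.End R (ℕ × ℕ → M) :=
  LinearMap.funLeft R M fun p => (p.1 + 1, p.2)

def shiftSnd : Module.End R (ℕ × ℕ → M) :=
  LinearMap.funLeft R M fun p => (p.1, p.2 + 1)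

variable {R M}

@[simp]
theorem shiftFst_apply (F : ℕ × ℕ → M) (p : ℕ × ℕ) : shiftFst R M F p = F (p.1 + 1, p.2) :=
  rfl

@[simp]
theorem shiftSnd_apply (F : ℕ × ℕ → M) (p : ℕ × ℕ) : shiftSnd R M F p = F (p.1, p.2 + 1) :=
  rfl

@[simp]
theorem shiftFst_pow_apply (i : ℕ) (F : ℕ × ℕ → M) (p : ℕ × ℕ) :
    (shiftFst R M ^ i) F p = F (p.1 + i, p.2) := by
  induction i generalizing F with
  | zero => rfl
  | succ i ih => rw [pow_succ, Module.End.mul_apply, ih, shiftFst_apply, add_assoc]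

@[simp]
theorem shiftSnd_pow_apply (i : ℕ) (F : ℕ × ℕ → M) (p : ℕ × ℕ) :
    (shiftSnd R M ^ i) F p = F (p.1, p.2 + i) := by
  induction i generalizing F with
  | zero => rfl
  | succ i ih => rw [pow_succ, Module.End.mul_apply, ih, shiftSnd_apply, add_assoc]

theorem commute_shiftFst_shiftSnd : Commute (shiftFst R M) (shiftSnd R M) :=
  LinearMap.ext fun _ => rfl

theorem LinearMap.commute_compLeft_shiftFst (f : M →ₗ[R] M) :
    Commute (f.compLeft (ℕ × ℕ)) (shiftFst R M) :=
  LinearMap.ext fun _ => rfl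

theorem LinearMap.commute_compLeft_shiftSnd (f : M →ₗ[R] M) :
    Commute (f.compLeft (ℕ × ℕ)) (shiftSnd R M) :=
  LinearMap.ext fun _ => rfl

end Shift

section WeightedShift

variable (R M : Type*) [CommSemiring R] [AddCommMonoid M] [Module R M]

def weightedShift (c : R) : Module.End R (ℕ × ℕ → M) :=
  shiftFst R M + shiftSnd R M + c • (shiftFst R M * shiftSnd R M)

variable {R M}

theorem weightedShift_pow (c : R) (n : ℕ) :
    weightedShift R M c ^ n =
      ∑ p ∈ antidiagonal n, ∑ q ∈ antidiagonal p.2, (n.choose p.1 * p.2.choose q.1) •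
        c ^ q.2 • (shiftFst R M ^ (p.1 + q.2) * shiftSnd R M ^ (q.1 + q.2)) :=
  commute_shiftFst_shiftSnd.add_add_smul_mul_pow c n

theorem LinearMap.commute_compLeft_weightedShift (f : M →ₗ[R] M) (c : R) :
    Commute (f.compLeft (ℕ × ℕ)) (weightedShift R M c) :=
  (f.commute_compLeft_shiftFst.add_right f.commute_compLeft_shiftSnd).add_right
    ((f.commute_compLeft_shiftFst.mul_right f.commute_compLeft_shiftSnd).smul_right c)

end WeightedShift

theorem iterate_apply_mul_eq_weightedShift_pow_apply {k A : Type*} [CommSemiring k] [Semiring A]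
    [Algebra k A] (lam : k) (d : A →ₗ[k] A)
    (hd : ∀ a b : A, d (a * b) = d a * b + a * d b + lam • (d a * d b)) (a b : A) (n : ℕ) :
    (⇑d)^[n] (a * b) =
      (weightedShift k A lam ^ n) (fun p => (⇑d)^[p.1] a * (⇑d)^[p.2] b) (0, 0) := by
  set F : ℕ × ℕ → A := fun p => (⇑d)^[p.1] a * (⇑d)^[p.2] b
  have hF : d.compLeft (ℕ × ℕ) F = weightedShift k A lam F := by
    funext p
    simp [F, weightedShift, hd, Function.iterate_succ_apply']
  calc (⇑d)^[n] (a * b) = ((d.compLeft (ℕ × ℕ)) ^ n) F (0, 0) := by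
        rw [LinearMap.compLeft_pow_apply]; rfl
    _ = (weightedShift k A lam ^ n) F (0, 0) := by
        rw [Module.End.pow_apply_eq_of_commute (d.commute_compLeft_weightedShift lam) hF]

theorem generalized_leibnitz_rule_general
    {k A : Type*} [CommRing k] [Ring A] [Algebra k A] (lam : k)
    (d : A →ₗ[k] A)
    (hd : ∀ a b : A, d (a * b) = d a * b + a * d b + lam • (d a * d b)) :
    ∀ (a b : A) (n : ℕ),
      (⇑d)^[n] (a * b) =
        ∑ p ∈ Finset.HasAntidiagonal.antidiagonal n, ∑ q ∈ Finset.HasAntidiagonal.antidiagonal p.2,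
          (Nat.factorial n / (Nat.factorial p.1 * Nat.factorial q.1 * Nat.factorial q.2)) •
            lam ^ q.2 • ((⇑d)^[p.1 + q.2] a * (⇑d)^[q.1 + q.2] b) := by
  intro a b n
  rw [iterate_apply_mul_eq_weightedShift_pow_apply lam d hd, weightedShift_pow]
  simp only [LinearMap.sum_apply, Finset.sum_apply, LinearMap.smul_apply, Pi.smul_apply,
    Module.End.mul_apply, shiftFst_pow_apply, shiftSnd_pow_apply, zero_add]
  refine sum_congr rfl fun p hp => sum_congr rfl fun q hq => ?_
  rw [HasAntidiagonal.mem_antidiagonal] at hp hq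
  rw [← hp, ← hq, Nat.choose_mul_choose_eq_factorial_div]

/-- generalized Leibnitz rule for a derivation of weight `lam`. -/
theorem generalized_leibnitz_rule
    {k A : Type*} [CommRing k] [Ring A] [Algebra k A] (lam : k)
    (d : A →ₗ[k] A) (hd1 : d 1 = 0)
    (hd : ∀ a b : A, d (a * b) = d a * b + a * d b + lam • (d a * d b)) :
    ∀ (a b : A) (n : ℕ),
      (⇑d)^[n] (a * b) =
        ∑ p ∈ Finset.HasAntidiagonal.antidiagonal n, ∑ q ∈ Finset.HasAntidiagonal.antidiagonal p.2,
          (Nat.factorial n / (Nat.factorial p.1 * Nat.factorial q.1 * Nat.factorial q.2)) •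
            lam ^ q.2 • ((⇑d)^[p.1 + q.2] a * (⇑d)^[q.1 + q.2] b) :=
  generalized_leibnitz_rule_general lam d hd
end

section
/- Let k be a commutative ring, A an associative unital k-algebra, and λ ∈ k. The λ-Hurwitz product on sequences ℕ → A is associative: for all f, g, h : ℕ → A, (f ·^λ g) ·^λ h = f ·^λ (g ·^λ h). -/
/-- The `lam`-Hurwitz product of sequences in a `k`-algebra `A`:
`(f ·^λ g)(n) = Σ_{r+s+t=n} (n!/(r!s!t!)) · λ^t · f(r+t) · g(s+t)`. -/
def hurwitz {k A : Type*} [CommRing k] [Ring A] [Algebra k A]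
    (lam : k) (f g : ℕ → A) : ℕ → A := fun n =>
  ∑ p ∈ Finset.HasAntidiagonal.antidiagonal n, ∑ q ∈ Finset.HasAntidiagonal.antidiagonal p.2,
    (Nat.factorial n / (Nat.factorial p.1 * Nat.factorial q.1 * Nat.factorial q.2)) •
      lam ^ q.2 • (f (p.1 + q.2) * g (q.1 + q.2))

/-! The shift `S f = f (· + 1)` is a `λ`-derivation for the Hurwitz product:
`S (f · g) = S f · g + f · S g + λ (S f · S g)`, which is Pascal's rule for the trinomial
coefficients. As the product is bilinear and `(f · g) 0 = f 0 * g 0`, this rule reduces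
associativity at `n + 1` to associativity at `n` for shifted sequences, so it follows by
induction on `n`, simultaneously for all `f g h`. -/

open Finset
open scoped Nat

theorem Nat.factorial_add_add_div_eq_choose_mul_choose (a b c : ℕ) :
    (a + (b + c))! / (a ! * b ! * c !) = (a + (b + c)).choose a * (b + c).choose b := by
  refine Nat.div_eq_of_eq_mul_left (by positivity) ?_
  calc (a + (b + c))! = (a + (b + c)).choose a * a ! * (b + c)! := by
        rw [Nat.choose_symm_add, Nat.add_choose_mul_factorial_mul_factorial]
    _ = (a + (b + c)).choose a * a ! * ((b + c).choose b * b ! * c !) := by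
        rw [Nat.choose_symm_add (a := b), Nat.add_choose_mul_factorial_mul_factorial]
    _ = _ := by ring

def seqShift {α : Type*} (f : ℕ → α) : ℕ → α := fun n => f (n + 1)

@[simp]
theorem seqShift_apply {α : Type*} (f : ℕ → α) (n : ℕ) : seqShift f n = f (n + 1) := rfl

section

variable {k A : Type*} [CommRing k] [Ring A] [Algebra k A] (lam : k)

theorem hurwitz_apply_eq_sum_choose (f g : ℕ → A) (n : ℕ) :
    hurwitz lam f g n = ∑ p ∈ antidiagonal n, n.choose p.1 •
      ∑ q ∈ antidiagonal p.2, p.2.choose q.1 • lam ^ q.2 • (f (p.1 + q.2) * g (q.1 + q.2)) := by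
  refine sum_congr rfl fun p hp => ?_
  rw [smul_sum]
  refine sum_congr rfl fun q hq => ?_
  rw [HasAntidiagonal.mem_antidiagonal] at hp hq
  rw [← mul_smul, ← hp, ← hq, Nat.factorial_add_add_div_eq_choose_mul_choose]

theorem hurwitz_zero_apply (f g : ℕ → A) : hurwitz lam f g 0 = f 0 * g 0 := by
  simp [hurwitz]

theorem seqShift_hurwitz (f g : ℕ → A) :
    seqShift (hurwitz lam f g) = hurwitz lam (seqShift f) g + hurwitz lam f (seqShift g)
      + lam • hurwitz lam (seqShift f) (seqShift g) := by
  funext n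
  -- Pascal's rule on the outer antidiagonal sum produces the `f`-shift, on the inner one the
  -- `g`-shift and the `λ`-term.
  have inner (i j : ℕ) :
      ∑ q ∈ antidiagonal (j + 1), (j + 1).choose q.1 • lam ^ q.2 • (f (i + q.2) * g (q.1 + q.2)) =
        ∑ q ∈ antidiagonal j, j.choose q.1 • lam ^ q.2 • (f (i + q.2) * g (q.1 + q.2 + 1)) +
          lam • ∑ q ∈ antidiagonal j,
            j.choose q.1 • lam ^ q.2 • (f (i + q.2 + 1) * g (q.1 + q.2 + 1)) := by
    rw [sum_antidiagonal_choose_succ_nsmul (M := A)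
      (fun s t => lam ^ t • (f (i + t) * g (s + t))), add_comm, smul_sum]
    congr 1
    · refine sum_congr rfl fun q hq => ?_
      rw [HasAntidiagonal.mem_antidiagonal] at hq
      rw [← Nat.choose_symm_of_eq_add hq.symm, add_right_comm q.1]
    · refine sum_congr rfl fun q _ => ?_
      rw [_root_.pow_succ', mul_smul, smul_comm (j.choose q.1) lam, ← add_assoc, ← add_assoc,
        add_right_comm q.1]
  simp only [seqShift_apply, Pi.add_apply, Pi.smul_apply, hurwitz_apply_eq_sum_choose]
  rw [sum_antidiagonal_choose_succ_nsmul (M := A) (fun i j => ∑ q ∈ antidiagonal j,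
    j.choose q.1 • lam ^ q.2 • (f (i + q.2) * g (q.1 + q.2))), add_comm, add_assoc]
  congr 1
  · refine sum_congr rfl fun p hp => ?_
    rw [HasAntidiagonal.mem_antidiagonal] at hp
    simp only [← Nat.choose_symm_of_eq_add hp.symm, add_right_comm p.1]
  · simp only [inner, smul_add, sum_add_distrib, smul_sum, smul_comm lam]

theorem hurwitz_add_left (f₁ f₂ g : ℕ → A) :
    hurwitz lam (f₁ + f₂) g = hurwitz lam f₁ g + hurwitz lam f₂ g := by
  funext n
  simp only [hurwitz, Pi.add_apply, add_mul, smul_add, sum_add_distrib]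

theorem hurwitz_add_right (f g₁ g₂ : ℕ → A) :
    hurwitz lam f (g₁ + g₂) = hurwitz lam f g₁ + hurwitz lam f g₂ := by
  funext n
  simp only [hurwitz, Pi.add_apply, mul_add, smul_add, sum_add_distrib]

theorem hurwitz_smul_left (c : k) (f g : ℕ → A) :
    hurwitz lam (c • f) g = c • hurwitz lam f g := by
  funext n
  simp only [hurwitz, Pi.smul_apply, smul_sum, smul_mul_assoc, smul_comm c]

theorem hurwitz_smul_right (c : k) (f g : ℕ → A) :
    hurwitz lam f (c • g) = c • hurwitz lam f g := by
  funext n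
  simp only [hurwitz, Pi.smul_apply, smul_sum, mul_smul_comm, smul_comm c]

end

/-- the `lam`-Hurwitz product is associative. -/
theorem hurwitz_assoc {k A : Type*} [CommRing k] [Ring A] [Algebra k A] (lam : k)
    (f g h : ℕ → A) :
    hurwitz lam (hurwitz lam f g) h = hurwitz lam f (hurwitz lam g h) := by
  funext n
  induction n generalizing f g h with
  | zero => simp only [hurwitz_zero_apply, mul_assoc]
  | succ n ih =>
    rw [← seqShift_apply (hurwitz lam (hurwitz lam f g) h),
      ← seqShift_apply (hurwitz lam f (hurwitz lam g h))]
    simp only [seqShift_hurwitz, hurwitz_add_left, hurwitz_add_right, hurwitz_smul_left,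
      hurwitz_smul_right, Pi.add_apply, Pi.smul_apply, ih]
    module
end

section
/- Let k be a commutative ring, A an associative unital k-algebra, λ ∈ k, and let d be a derivation of weight λ on A. Define d* : A → (ℕ → A) by d*(a)(n) = dⁿ(a). Then d* is a k-algebra homomorphism into sequences equipped with the λ-Hurwitz product: d* is k-linear, d*(1) = e, and d*(a·b) = d*(a) ·^λ d*(b) for all a, b ∈ A. -/
open Finset TensorProduct LinearMap

lemma trinom_eq {n a b c e : ℕ} (h1 : a + b = n) (h2 : c + e = b) :
    Nat.factorial n / (Nat.factorial a * Nat.factorial c * Nat.factorial e)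
      = n.choose a * b.choose c := by
  subst h1; subst h2
  apply Nat.div_eq_of_eq_mul_left
  · positivity
  · have h3 : (a + (c + e)).choose a * a.factorial * (c + e).factorial
        = (a + (c + e)).factorial := by
      have := Nat.choose_mul_factorial_mul_factorial (Nat.le_add_right a (c + e))
      simpa using this
    have h4 : (c + e).choose c * c.factorial * e.factorial = (c + e).factorial := by
      have := Nat.choose_mul_factorial_mul_factorial (Nat.le_add_right c e)
      simpa using this
    calc (a + (c + e)).factorial
        = (a + (c + e)).choose a * a.factorial * ((c + e).choose c * c.factorial * e.factorial) := by
          rw [h4, h3]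
      _ = (a + (c + e)).choose a * (c + e).choose c
            * (a.factorial * c.factorial * e.factorial) := by ring

section main
variable {k A : Type*} [CommRing k] [Ring A] [Algebra k A]

lemma rTensor_pow_tmul (d : A →ₗ[k] A) (i : ℕ) (a b : A) :
    ((d.rTensor A) ^ i) (a ⊗ₜ[k] b) = ((⇑d)^[i] a) ⊗ₜ[k] b := by
  induction i with
  | zero => rfl
  | succ i ih =>
    rw [pow_succ', Module.End.mul_apply, ih, rTensor_tmul, Function.iterate_succ_apply']

lemma lTensor_pow_tmul (d : A →ₗ[k] A) (i : ℕ) (a b : A) :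
    ((d.lTensor A) ^ i) (a ⊗ₜ[k] b) = a ⊗ₜ[k] ((⇑d)^[i] b) := by
  induction i with
  | zero => rfl
  | succ i ih =>
    rw [pow_succ', Module.End.mul_apply, ih, lTensor_tmul, Function.iterate_succ_apply']

lemma comm_LR (d : A →ₗ[k] A) : Commute (d.rTensor A) (d.lTensor A) := by
  apply TensorProduct.ext'
  intro a b
  simp [Module.End.mul_apply]

lemma iterate_mul_eq (lam : k) (d : A →ₗ[k] A)
    (hd : ∀ a b : A, d (a * b) = d a * b + a * d b + lam • (d a * d b)) (n : ℕ) (a b : A) :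
    (⇑d)^[n] (a * b) =
      ∑ p ∈ Finset.HasAntidiagonal.antidiagonal n, ∑ q ∈ Finset.HasAntidiagonal.antidiagonal p.2,
        (n.choose p.1 * p.2.choose q.1) •
          lam ^ q.2 • ((⇑d)^[p.1 + q.2] a * (⇑d)^[q.1 + q.2] b) := by
  set L := d.rTensor A with hL
  set R := d.lTensor A with hR
  set E : Module.End k (A ⊗[k] A) := L + R + lam • (L * R) with hEdef
  set μ := LinearMap.mul' k A with hμ
  have key : ∀ x, μ (E x) = d (μ x) := by
    have h : μ ∘ₗ E = d ∘ₗ μ := by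
      apply TensorProduct.ext'
      intro a b
      simp [hEdef, hL, hR, hμ, Module.End.mul_apply, LinearMap.mul'_apply, hd]
    exact fun x => LinearMap.ext_iff.mp h x
  have key2 : ∀ (m : ℕ) (x), μ ((E ^ m) x) = (⇑d)^[m] (μ x) := by
    intro m
    induction m with
    | zero => intro x; rfl
    | succ m ih =>
      intro x
      rw [pow_succ', Module.End.mul_apply, key, ih]
      exact (Function.iterate_succ_apply' _ _ _).symm
  have hab : (⇑d)^[n] (a * b) = μ ((E ^ n) (a ⊗ₜ[k] b)) := by
    rw [key2, hμ, LinearMap.mul'_apply]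
  have hC1 : Commute L (R + lam • (L * R)) :=
    (comm_LR d).add_right (((Commute.refl L).mul_right (comm_LR d)).smul_right lam)
  have hC2 : Commute R (lam • (L * R)) :=
    (((comm_LR d).symm.mul_right (Commute.refl R))).smul_right lam
  have h1 : E ^ n = ∑ p ∈ Finset.HasAntidiagonal.antidiagonal n,
      n.choose p.1 • (L ^ p.1 * (R + lam • (L * R)) ^ p.2) := by
    rw [hEdef, add_assoc, hC1.add_pow']
  have h2 : ∀ m : ℕ, (R + lam • (L * R)) ^ m
      = ∑ q ∈ Finset.HasAntidiagonal.antidiagonal m, m.choose q.1 •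
          (R ^ q.1 * (lam ^ q.2 • (L ^ q.2 * R ^ q.2))) := by
    intro m
    rw [hC2.add_pow']
    refine Finset.sum_congr rfl fun q _ => ?_
    rw [smul_pow, (comm_LR d).mul_pow]
  rw [hab, h1]
  simp only [LinearMap.coe_sum, Finset.sum_apply, map_sum, LinearMap.smul_apply, map_nsmul]
  refine Finset.sum_congr rfl fun p _ => ?_
  rw [h2 p.2]
  rw [Module.End.mul_apply]
  simp only [LinearMap.coe_sum, Finset.sum_apply, LinearMap.smul_apply, Module.End.mul_apply,
    map_sum, map_nsmul, map_smul, smul_smul]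
  rw [Finset.smul_sum]
  refine Finset.sum_congr rfl fun q _ => ?_
  rw [lTensor_pow_tmul, rTensor_pow_tmul, lTensor_pow_tmul, rTensor_pow_tmul, hμ,
    ← Function.iterate_add_apply, ← Function.iterate_add_apply]
  rw [LinearMap.mul'_apply, mul_smul]

end main

/-- The sequence `e` with `e 0 = 1` and `e n = 0` for `n > 0`. -/
def hurwitzUnit {A : Type*} [Ring A] : ℕ → A := fun n => if n = 0 then 1 else 0

/-- for a derivation `d` of weight `lam`, the map `d* : A → (ℕ → A)`,
`d*(a)(n) = dⁿ(a)`, is a `k`-algebra homomorphism into the `lam`-Hurwitz algebra. -/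
theorem dstar_algebra_hom
    {k A : Type*} [CommRing k] [Ring A] [Algebra k A] (lam : k)
    (d : A →ₗ[k] A) (hd1 : d 1 = 0)
    (hd : ∀ a b : A, d (a * b) = d a * b + a * d b + lam • (d a * d b)) :
    (∀ (c : k) (a a' : A),
        (fun n => (⇑d)^[n] (c • a + a')) =
          c • (fun n => (⇑d)^[n] a) + fun n => (⇑d)^[n] a') ∧
    ((fun n => (⇑d)^[n] (1 : A)) = hurwitzUnit) ∧
    (∀ a b : A,
        (fun n => (⇑d)^[n] (a * b)) =
          hurwitz lam (fun n => (⇑d)^[n] a) fun n => (⇑d)^[n] b) := by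
  have hzero : ∀ m : ℕ, (⇑d)^[m] (0 : A) = 0 := by
    intro m
    induction m with
    | zero => rfl
    | succ m ih => rw [Function.iterate_succ_apply', ih, map_zero]
  refine ⟨?_, ?_, ?_⟩
  · intro c a a'
    funext n
    simp only [Pi.add_apply, Pi.smul_apply]
    induction n with
    | zero => simp
    | succ n ih =>
      rw [Function.iterate_succ_apply', Function.iterate_succ_apply',
        Function.iterate_succ_apply', ih, map_add, map_smul]
  · funext n
    cases n with
    | zero => rfl
    | succ n =>
      rw [Function.iterate_succ_apply, hd1, hzero]
      simp [hurwitzUnit]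
  · intro a b
    funext n
    rw [iterate_mul_eq lam d hd n a b, hurwitz]
    refine Finset.sum_congr rfl fun p hp => Finset.sum_congr rfl fun q hq => ?_
    rw [trinom_eq (Finset.HasAntidiagonal.mem_antidiagonal.mp hp) (Finset.HasAntidiagonal.mem_antidiagonal.mp hq)]
end

section
/- Let k be a commutative ring, A an associative unital k-algebra, and λ ∈ k. The shift map d : (ℕ → A) → (ℕ → A) defined by d(f)(n) = f(n+1) is a derivation of weight λ for the λ-Hurwitz product: d is k-linear, d(e) = 0, and d(f ·^λ g) = d(f) ·^λ g + f ·^λ d(g) + λ·(d(f) ·^λ d(g)) for all f, g : ℕ → A. -/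
/-- The shift map `d(f)(n) = f(n+1)`. -/
def shift {A : Type*} (f : ℕ → A) : ℕ → A := fun n => f (n + 1)

/-!
Since `n! / (r! s! t!) = C(n, r) · C(s + t, s)`, the `λ`-Hurwitz product splits as a binomial
sum over `r` of inner sums over `s + t`. Pascal's rule on the outer sum produces the terms with `f`
shifted, and Pascal's rule on the inner sum (the variable `t` appearing in both factors) produces
those with `g` shifted and, from `t ↦ t + 1`, the extra `λ`-weighted term with both shifted.
-/

open Finset
open scoped Nat

theorem Nat.factorial_div_eq_choose_mul_choose {n r m s t : ℕ} (hn : r + m = n) (hm : s + t = m) :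
    n ! / (r ! * s ! * t !) = n.choose r * m.choose s := by
  refine Nat.div_eq_of_eq_mul_left (by positivity) ?_
  have hr : n.choose r * r ! * m ! = n ! := by
    rw [show m = n - r by omega]; exact Nat.choose_mul_factorial_mul_factorial (by omega)
  have hs : m.choose s * s ! * t ! = m ! := by
    rw [show t = m - s by omega]; exact Nat.choose_mul_factorial_mul_factorial (by omega)
  rw [← hr, ← hs]; ring

theorem shift_iterate_apply {A : Type*} (f : ℕ → A) (r t : ℕ) : shift^[r] f t = f (r + t) := by
  induction r generalizing f with
  | zero => simp
  | succ r ih => rw [Function.iterate_succ_apply, ih, shift, add_right_comm, add_assoc]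

section Inner

variable {k A : Type*} [CommSemiring k] [Semiring A] [Algebra k A]

def hurwitzInner (lam : k) (f g : ℕ → A) (m : ℕ) : A :=
  ∑ q ∈ antidiagonal m, m.choose q.1 • lam ^ q.2 • (f q.2 * g (q.1 + q.2))

theorem hurwitzInner_succ (lam : k) (f g : ℕ → A) (m : ℕ) :
    hurwitzInner lam f g (m + 1) =
      hurwitzInner lam f (shift g) m + lam • hurwitzInner lam (shift f) (shift g) m := by
  rw [hurwitzInner, sum_antidiagonal_choose_succ_nsmul (fun s t => lam ^ t • (f t * g (s + t))),
    add_comm, hurwitzInner, hurwitzInner, smul_sum]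
  congr 1
  · refine sum_congr rfl fun q hq => ?_
    rw [Nat.choose_symm_of_eq_add (mem_antidiagonal.1 hq).symm, add_right_comm]
    rfl
  · refine sum_congr rfl fun q _ => ?_
    rw [pow_succ', mul_smul, smul_comm (m.choose q.1) lam]
    rfl

end Inner

section Hurwitz

variable {k A : Type*} [CommRing k] [Ring A] [Algebra k A]

theorem hurwitz_eq_sum_choose_smul_hurwitzInner (lam : k) (f g : ℕ → A) (n : ℕ) :
    hurwitz lam f g n =
      ∑ p ∈ antidiagonal n, n.choose p.1 • hurwitzInner lam (shift^[p.1] f) g p.2 := by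
  refine sum_congr rfl fun p hp => ?_
  rw [hurwitzInner, smul_sum]
  refine sum_congr rfl fun q hq => ?_
  rw [Nat.factorial_div_eq_choose_mul_choose (mem_antidiagonal.1 hp) (mem_antidiagonal.1 hq),
    mul_smul, shift_iterate_apply]

theorem hurwitz_succ (lam : k) (f g : ℕ → A) (n : ℕ) :
    hurwitz lam f g (n + 1) =
      hurwitz lam (shift f) g n + hurwitz lam f (shift g) n +
        lam • hurwitz lam (shift f) (shift g) n := by
  have hcomm (i : ℕ) : shift (shift^[i] f) = shift^[i] (shift f) :=
    (Function.Commute.iterate_self shift i f).symm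
  simp only [hurwitz_eq_sum_choose_smul_hurwitzInner]
  rw [sum_antidiagonal_choose_succ_nsmul (fun i j => hurwitzInner lam (shift^[i] f) g j) n]
  simp only [hurwitzInner_succ, hcomm, Function.iterate_succ_apply, smul_add, sum_add_distrib,
    smul_sum]
  rw [add_comm, ← add_assoc]
  congr 1
  · congr 1
    refine sum_congr rfl fun p hp => ?_
    rw [Nat.choose_symm_of_eq_add (mem_antidiagonal.1 hp).symm]
  · exact sum_congr rfl fun p _ => smul_comm _ lam _

end Hurwitz

/-- the shift map is a derivation of weight `lam` for the
`lam`-Hurwitz product on `ℕ → A`. -/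
theorem shift_weighted_derivation_hurwitz
    {k A : Type*} [CommRing k] [Ring A] [Algebra k A] (lam : k) :
    (∀ f g : ℕ → A, shift (f + g) = shift f + shift g) ∧
    (∀ (c : k) (f : ℕ → A), shift (c • f) = c • shift f) ∧
    (shift (hurwitzUnit : ℕ → A) = 0) ∧
    (∀ f g : ℕ → A,
      shift (hurwitz lam f g) =
        hurwitz lam (shift f) g + hurwitz lam f (shift g) +
          lam • hurwitz lam (shift f) (shift g)) := by
  refine ⟨fun f g => rfl, fun c f => rfl, ?_, fun f g => funext (hurwitz_succ lam f g)⟩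
  funext n
  simp [shift, hurwitzUnit]
end

section
/- Let k be a commutative ring, A an associative unital k-algebra, and λ ∈ k. Define d* : (ℕ → A) → (ℕ → (ℕ → A)) by d*(f)(m)(n) = f(m+n). Then d* is multiplicative from the λ-Hurwitz algebra of A-valued sequences to the λ-Hurwitz algebra of sequences valued in the λ-Hurwitz algebra (ℕ → A): for all f, g : ℕ → A, d*(f ·^λ g) = d*(f) ·^λ d*(g), where the outer λ-Hurwitz product is taken in ℕ → (ℕ → A) with multiplication given by the λ-Hurwitz product of A-valued sequences. -/
/-- The `lam`-Hurwitz product with respect to an arbitrary multiplication `mul` on a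
`k`-module `M`:
`(f ·^λ g)(n) = Σ_{r+s+t=n} (n!/(r!s!t!)) • λ^t • mul (f (r+t)) (g (s+t))`. -/
def hurwitzWith {k M : Type*} [CommRing k] [AddCommMonoid M] [Module k M]
    (lam : k) (mul : M → M → M) (f g : ℕ → M) : ℕ → M := fun n =>
  ∑ p ∈ Finset.HasAntidiagonal.antidiagonal n, ∑ q ∈ Finset.HasAntidiagonal.antidiagonal p.2,
    (Nat.factorial n / (Nat.factorial p.1 * Nat.factorial q.1 * Nat.factorial q.2)) •
      lam ^ q.2 • mul (f (p.1 + q.2)) (g (q.1 + q.2))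

namespace HurwitzAux

/-- Triples summing to `n`. -/
def tri (n : ℕ) : Finset (ℕ × ℕ × ℕ) :=
  (Finset.range (n+1) ×ˢ Finset.range (n+1) ×ˢ Finset.range (n+1)).filter
    (fun x => x.1 + x.2.1 + x.2.2 = n)

lemma mem_tri {n : ℕ} {x : ℕ × ℕ × ℕ} : x ∈ tri n ↔ x.1 + x.2.1 + x.2.2 = n := by
  simp only [tri, Finset.mem_filter, Finset.mem_product, Finset.mem_range]
  constructor
  · rintro ⟨_, h⟩; exact h
  · intro h; omega

/-- Trinomial coefficient. -/
def c (r s t : ℕ) : ℕ := (r+s+t).factorial / (r.factorial * s.factorial * t.factorial)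

lemma fact_dvd (r s t : ℕ) : r.factorial * s.factorial * t.factorial ∣ (r+s+t).factorial :=
  (mul_dvd_mul (Nat.factorial_mul_factorial_dvd_factorial_add r s) dvd_rfl).trans
    (Nat.factorial_mul_factorial_dvd_factorial_add (r+s) t)

lemma c_mul (r s t : ℕ) :
    c r s t * (r.factorial * s.factorial * t.factorial) = (r+s+t).factorial :=
  Nat.div_mul_cancel (fact_dvd r s t)

lemma c_pascal {r s t n : ℕ} (h : r + s + t = n + 1) :
    c r s t = (if r = 0 then 0 else c (r-1) s t) + (if s = 0 then 0 else c r (s-1) t)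
      + (if t = 0 then 0 else c r s (t-1)) := by
  have hpos : 0 < r.factorial * s.factorial * t.factorial := by positivity
  apply Nat.eq_of_mul_eq_mul_right hpos
  rw [c_mul, h]
  have h1 : (if r = 0 then 0 else c (r-1) s t) * (r.factorial * s.factorial * t.factorial)
      = n.factorial * r := by
    cases r with
    | zero => simp
    | succ a =>
      simp only [Nat.succ_ne_zero, if_false, Nat.succ_sub_one]
      have e : (a+1).factorial * s.factorial * t.factorial
          = (a.factorial * s.factorial * t.factorial) * (a+1) := by
        rw [Nat.factorial_succ]; ring
      rw [e, ← mul_assoc, c_mul]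
      have e2 : a + s + t = n := by omega
      rw [e2]
  have h2 : (if s = 0 then 0 else c r (s-1) t) * (r.factorial * s.factorial * t.factorial)
      = n.factorial * s := by
    cases s with
    | zero => simp
    | succ b =>
      simp only [Nat.succ_ne_zero, if_false, Nat.succ_sub_one]
      have e : r.factorial * (b+1).factorial * t.factorial
          = (r.factorial * b.factorial * t.factorial) * (b+1) := by
        rw [Nat.factorial_succ]; ring
      rw [e, ← mul_assoc, c_mul]
      have e2 : r + b + t = n := by omega
      rw [e2]
  have h3 : (if t = 0 then 0 else c r s (t-1)) * (r.factorial * s.factorial * t.factorial)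
      = n.factorial * t := by
    cases t with
    | zero => simp
    | succ d =>
      simp only [Nat.succ_ne_zero, if_false, Nat.succ_sub_one]
      have e : r.factorial * s.factorial * (d+1).factorial
          = (r.factorial * s.factorial * d.factorial) * (d+1) := by
        rw [Nat.factorial_succ]; ring
      rw [e, ← mul_assoc, c_mul]
      have e2 : r + s + d = n := by omega
      rw [e2]
  rw [add_mul, add_mul, h1, h2, h3, ← Nat.mul_add, ← Nat.mul_add, h, Nat.factorial_succ]
  ring

lemma hurwitz_eq {k M : Type*} [CommRing k] [AddCommMonoid M] [Module k M]
    (lam : k) (mul : M → M → M) (f g : ℕ → M) (n : ℕ) :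
    hurwitzWith lam mul f g n
      = ∑ x ∈ tri n,
          c x.1 x.2.1 x.2.2 • lam ^ x.2.2 • mul (f (x.1 + x.2.2)) (g (x.2.1 + x.2.2)) := by
  show (∑ p ∈ Finset.HasAntidiagonal.antidiagonal n, ∑ q ∈ Finset.HasAntidiagonal.antidiagonal p.2,
      (Nat.factorial n / (Nat.factorial p.1 * Nat.factorial q.1 * Nat.factorial q.2)) •
        lam ^ q.2 • mul (f (p.1 + q.2)) (g (q.1 + q.2))) = _
  rw [Finset.sum_sigma' (Finset.HasAntidiagonal.antidiagonal n) (fun p => Finset.HasAntidiagonal.antidiagonal p.2)]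
  refine Finset.sum_nbij' (fun x => (x.1.1, x.2)) (fun x => ⟨(x.1, x.2.1 + x.2.2), x.2⟩)
    ?_ ?_ ?_ ?_ ?_
  · rintro ⟨⟨p1, p2⟩, q1, q2⟩ ha
    simp only [Finset.mem_sigma, Finset.HasAntidiagonal.mem_antidiagonal] at ha
    exact mem_tri.mpr (show p1 + q1 + q2 = n by omega)
  · rintro ⟨r, s, t⟩ ha
    have h : r + s + t = n := mem_tri.mp ha
    refine Finset.mem_sigma.mpr ⟨?_, ?_⟩
    · exact Finset.HasAntidiagonal.mem_antidiagonal.mpr (show r + (s + t) = n by omega)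
    · exact Finset.HasAntidiagonal.mem_antidiagonal.mpr rfl
  · rintro ⟨⟨p1, p2⟩, q1, q2⟩ ha
    simp only [Finset.mem_sigma, Finset.HasAntidiagonal.mem_antidiagonal] at ha
    obtain ⟨h1, h2⟩ := ha
    show (⟨(p1, q1 + q2), (q1, q2)⟩ : Σ _ : ℕ × ℕ, ℕ × ℕ) = ⟨(p1, p2), (q1, q2)⟩
    rw [show q1 + q2 = p2 from h2]
  · rintro ⟨r, s, t⟩ _; rfl
  · rintro ⟨⟨p1, p2⟩, q1, q2⟩ ha
    simp only [Finset.mem_sigma, Finset.HasAntidiagonal.mem_antidiagonal] at ha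
    have hn : n = p1 + q1 + q2 := by omega
    show (n.factorial / (p1.factorial * q1.factorial * q2.factorial)) •
        lam ^ q2 • mul (f (p1 + q2)) (g (q1 + q2)) = c p1 q1 q2 •
        lam ^ q2 • mul (f (p1 + q2)) (g (q1 + q2))
    rw [hn]
    rfl

def emb1 : ℕ × ℕ × ℕ ↪ ℕ × ℕ × ℕ :=
  ⟨fun x => (x.1 + 1, x.2), by rintro ⟨a, b⟩ ⟨a', b'⟩ h; simpa [Prod.ext_iff] using h⟩

def emb2 : ℕ × ℕ × ℕ ↪ ℕ × ℕ × ℕ :=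
  ⟨fun x => (x.1, x.2.1 + 1, x.2.2), by
    rintro ⟨a, b, c⟩ ⟨a', b', c'⟩ h; simpa [Prod.ext_iff] using h⟩

def emb3 : ℕ × ℕ × ℕ ↪ ℕ × ℕ × ℕ :=
  ⟨fun x => (x.1, x.2.1, x.2.2 + 1), by
    rintro ⟨a, b, c⟩ ⟨a', b', c'⟩ h; simpa [Prod.ext_iff] using h⟩

/-- reindex along first coordinate -/
lemma sum_shift1 {M : Type*} [AddCommMonoid M] (n : ℕ) (F : ℕ × ℕ × ℕ → M) :
    (∑ x ∈ tri (n+1), if x.1 = 0 then 0 else F (x.1 - 1, x.2)) = ∑ x ∈ tri n, F x := by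
  have h1 : ∑ x ∈ (tri n).map emb1, (if x.1 = 0 then 0 else F (x.1 - 1, x.2))
      = ∑ x ∈ tri n, F x := by
    rw [Finset.sum_map]
    refine Finset.sum_congr rfl fun x _ => ?_
    obtain ⟨a, b⟩ := x
    simp [emb1]
    rfl
  rw [← h1]
  refine (Finset.sum_subset ?_ ?_).symm
  · intro x hx
    rw [Finset.mem_map] at hx
    obtain ⟨⟨a, b, d⟩, hy, rfl⟩ := hx
    have h : a + b + d = n := mem_tri.mp hy
    exact mem_tri.mpr (show a + 1 + b + d = n + 1 by omega)
  · rintro ⟨r, s, t⟩ hx hnx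
    have hmem : r + s + t = n + 1 := mem_tri.mp hx
    by_cases h0 : r = 0
    · simp [h0]
    · exfalso; apply hnx
      rw [Finset.mem_map]
      refine ⟨(r - 1, s, t), mem_tri.mpr (show r - 1 + s + t = n by omega), ?_⟩
      show (r - 1 + 1, s, t) = (r, s, t)
      rw [Prod.mk.injEq]
      exact ⟨by omega, rfl⟩

lemma sum_shift2 {M : Type*} [AddCommMonoid M] (n : ℕ) (F : ℕ × ℕ × ℕ → M) :
    (∑ x ∈ tri (n+1), if x.2.1 = 0 then 0 else F (x.1, x.2.1 - 1, x.2.2))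
      = ∑ x ∈ tri n, F x := by
  have h1 : ∑ x ∈ (tri n).map emb2, (if x.2.1 = 0 then 0 else F (x.1, x.2.1 - 1, x.2.2))
      = ∑ x ∈ tri n, F x := by
    rw [Finset.sum_map]
    refine Finset.sum_congr rfl fun x _ => ?_
    obtain ⟨a, b, d⟩ := x
    simp [emb2]
    rfl
  rw [← h1]
  refine (Finset.sum_subset ?_ ?_).symm
  · intro x hx
    rw [Finset.mem_map] at hx
    obtain ⟨⟨a, b, d⟩, hy, rfl⟩ := hx
    have h : a + b + d = n := mem_tri.mp hy
    exact mem_tri.mpr (show a + (b + 1) + d = n + 1 by omega)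
  · rintro ⟨r, s, t⟩ hx hnx
    have hmem : r + s + t = n + 1 := mem_tri.mp hx
    by_cases h0 : s = 0
    · simp [h0]
    · exfalso; apply hnx
      rw [Finset.mem_map]
      refine ⟨(r, s - 1, t), mem_tri.mpr (show r + (s - 1) + t = n by omega), ?_⟩
      show (r, s - 1 + 1, t) = (r, s, t)
      rw [Prod.mk.injEq, Prod.mk.injEq]
      exact ⟨rfl, by omega, rfl⟩

lemma sum_shift3 {M : Type*} [AddCommMonoid M] (n : ℕ) (F : ℕ × ℕ × ℕ → M) :
    (∑ x ∈ tri (n+1), if x.2.2 = 0 then 0 else F (x.1, x.2.1, x.2.2 - 1))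
      = ∑ x ∈ tri n, F x := by
  have h1 : ∑ x ∈ (tri n).map emb3, (if x.2.2 = 0 then 0 else F (x.1, x.2.1, x.2.2 - 1))
      = ∑ x ∈ tri n, F x := by
    rw [Finset.sum_map]
    refine Finset.sum_congr rfl fun x _ => ?_
    obtain ⟨a, b, d⟩ := x
    simp [emb3]
    rfl
  rw [← h1]
  refine (Finset.sum_subset ?_ ?_).symm
  · intro x hx
    rw [Finset.mem_map] at hx
    obtain ⟨⟨a, b, d⟩, hy, rfl⟩ := hx
    have h : a + b + d = n := mem_tri.mp hy
    exact mem_tri.mpr (show a + b + (d + 1) = n + 1 by omega)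
  · rintro ⟨r, s, t⟩ hx hnx
    have hmem : r + s + t = n + 1 := mem_tri.mp hx
    by_cases h0 : t = 0
    · simp [h0]
    · exfalso; apply hnx
      rw [Finset.mem_map]
      refine ⟨(r, s, t - 1), mem_tri.mpr (show r + s + (t - 1) = n by omega), ?_⟩
      show (r, s, t - 1 + 1) = (r, s, t)
      rw [Prod.mk.injEq, Prod.mk.injEq]
      exact ⟨rfl, rfl, by omega⟩

/-- The Leibniz rule for the `lam`-Hurwitz product (with arbitrary `mul`). -/
lemma leibniz {k M : Type*} [CommRing k] [AddCommMonoid M] [Module k M]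
    (lam : k) (mul : M → M → M) (f g : ℕ → M) (n : ℕ) :
    hurwitzWith lam mul f g (n+1)
      = hurwitzWith lam mul (fun i => f (i+1)) g n
        + hurwitzWith lam mul f (fun i => g (i+1)) n
        + lam • hurwitzWith lam mul (fun i => f (i+1)) (fun i => g (i+1)) n := by
  have key : ∀ x ∈ tri (n+1),
      c x.1 x.2.1 x.2.2 • lam ^ x.2.2 • mul (f (x.1 + x.2.2)) (g (x.2.1 + x.2.2))
      = (if x.1 = 0 then 0 else (fun y : ℕ × ℕ × ℕ =>
            c y.1 y.2.1 y.2.2 • lam ^ y.2.2 • mul (f (y.1 + y.2.2 + 1)) (g (y.2.1 + y.2.2)))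
            (x.1 - 1, x.2))
        + (if x.2.1 = 0 then 0 else (fun y : ℕ × ℕ × ℕ =>
            c y.1 y.2.1 y.2.2 • lam ^ y.2.2 • mul (f (y.1 + y.2.2)) (g (y.2.1 + y.2.2 + 1)))
            (x.1, x.2.1 - 1, x.2.2))
        + (if x.2.2 = 0 then 0 else (fun y : ℕ × ℕ × ℕ =>
            c y.1 y.2.1 y.2.2 • lam ^ (y.2.2 + 1) •
              mul (f (y.1 + y.2.2 + 1)) (g (y.2.1 + y.2.2 + 1)))
            (x.1, x.2.1, x.2.2 - 1)) := by
    rintro ⟨r, s, t⟩ hx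
    have h := mem_tri.mp hx
    try dsimp only at h ⊢
    rw [c_pascal h, add_smul, add_smul]
    have b1 : (if r = 0 then 0 else c (r-1) s t) • lam ^ t • mul (f (r + t)) (g (s + t))
        = if r = 0 then 0
          else c (r-1) s t • lam ^ t • mul (f (r - 1 + t + 1)) (g (s + t)) := by
      by_cases h0 : r = 0
      · simp [h0]
      · rw [if_neg h0, if_neg h0]
        have : r - 1 + t + 1 = r + t := by omega
        rw [this]
    have b2 : (if s = 0 then 0 else c r (s-1) t) • lam ^ t • mul (f (r + t)) (g (s + t))
        = if s = 0 then 0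
          else c r (s-1) t • lam ^ t • mul (f (r + t)) (g (s - 1 + t + 1)) := by
      by_cases h0 : s = 0
      · simp [h0]
      · rw [if_neg h0, if_neg h0]
        have : s - 1 + t + 1 = s + t := by omega
        rw [this]
    have b3 : (if t = 0 then 0 else c r s (t-1)) • lam ^ t • mul (f (r + t)) (g (s + t))
        = if t = 0 then 0
          else c r s (t-1) • lam ^ (t - 1 + 1) •
            mul (f (r + (t - 1) + 1)) (g (s + (t - 1) + 1)) := by
      by_cases h0 : t = 0
      · simp [h0]
      · rw [if_neg h0, if_neg h0]
        have e1 : t - 1 + 1 = t := by omega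
        have e2 : r + (t - 1) + 1 = r + t := by omega
        have e3 : s + (t - 1) + 1 = s + t := by omega
        rw [e1, e2, e3]
    rw [b1, b2, b3]
  rw [hurwitz_eq lam mul f g, Finset.sum_congr rfl key, Finset.sum_add_distrib,
    Finset.sum_add_distrib,
    sum_shift1 n (fun y : ℕ × ℕ × ℕ =>
      c y.1 y.2.1 y.2.2 • lam ^ y.2.2 • mul (f (y.1 + y.2.2 + 1)) (g (y.2.1 + y.2.2))),
    sum_shift2 n (fun y : ℕ × ℕ × ℕ =>
      c y.1 y.2.1 y.2.2 • lam ^ y.2.2 • mul (f (y.1 + y.2.2)) (g (y.2.1 + y.2.2 + 1))),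
    sum_shift3 n (fun y : ℕ × ℕ × ℕ =>
      c y.1 y.2.1 y.2.2 • lam ^ (y.2.2 + 1) • mul (f (y.1 + y.2.2 + 1)) (g (y.2.1 + y.2.2 + 1))),
    hurwitz_eq lam mul (fun i => f (i+1)) g n,
    hurwitz_eq lam mul f (fun i => g (i+1)) n,
    hurwitz_eq lam mul (fun i => f (i+1)) (fun i => g (i+1)) n]
  have e1 : (∑ x ∈ tri n,
        c x.1 x.2.1 x.2.2 • lam ^ x.2.2 • mul (f (x.1 + x.2.2 + 1)) (g (x.2.1 + x.2.2)))
      = ∑ x ∈ tri n, c x.1 x.2.1 x.2.2 • lam ^ x.2.2 •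
          mul ((fun i => f (i+1)) (x.1 + x.2.2)) (g (x.2.1 + x.2.2)) :=
    Finset.sum_congr rfl fun x _ => rfl
  have e2 : (∑ x ∈ tri n,
        c x.1 x.2.1 x.2.2 • lam ^ x.2.2 • mul (f (x.1 + x.2.2)) (g (x.2.1 + x.2.2 + 1)))
      = ∑ x ∈ tri n, c x.1 x.2.1 x.2.2 • lam ^ x.2.2 •
          mul (f (x.1 + x.2.2)) ((fun i => g (i+1)) (x.2.1 + x.2.2)) :=
    Finset.sum_congr rfl fun x _ => rfl
  have e3 : (∑ x ∈ tri n,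
        c x.1 x.2.1 x.2.2 • lam ^ (x.2.2 + 1) •
          mul (f (x.1 + x.2.2 + 1)) (g (x.2.1 + x.2.2 + 1)))
      = lam • ∑ x ∈ tri n, c x.1 x.2.1 x.2.2 • lam ^ x.2.2 •
          mul ((fun i => f (i+1)) (x.1 + x.2.2)) ((fun i => g (i+1)) (x.2.1 + x.2.2)) := by
    rw [Finset.smul_sum]
    refine Finset.sum_congr rfl fun x _ => ?_
    rw [pow_succ', mul_smul]
    exact smul_comm _ _ _
  rw [e1, e2, e3]

lemma key_ind {k A : Type*} [CommRing k] [Ring A] [Algebra k A] (lam : k) :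
    ∀ (m : ℕ) (f g : ℕ → A) (n : ℕ),
      hurwitzWith lam (· * ·) f g (m + n)
        = hurwitzWith lam (hurwitzWith lam (· * ·))
            (fun m n => f (m + n)) (fun m n => g (m + n)) m n := by
  intro m
  induction m with
  | zero =>
    intro f g n
    simp [hurwitzWith]
  | succ m ih =>
    intro f g n
    have h1 : m + 1 + n = (m + n) + 1 := by omega
    rw [h1, leibniz]
    have h2 := leibniz lam (hurwitzWith lam (· * ·))
      (fun m n => f (m + n)) (fun m n => g (m + n)) m
    rw [h2, Pi.add_apply, Pi.add_apply, Pi.smul_apply]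
    have e1 : (fun i => (fun m n => f (m + n)) (i + 1)) = (fun m n => f (m + (n + 1))) := by
      funext a b
      show f (a + 1 + b) = f (a + (b + 1))
      congr 1 <;> omega
    have e2 : (fun i => (fun m n => g (m + n)) (i + 1)) = (fun m n => g (m + (n + 1))) := by
      funext a b
      show g (a + 1 + b) = g (a + (b + 1))
      congr 1 <;> omega
    rw [e1, e2]
    have i1 := ih (fun i => f (i + 1)) g n
    have i2 := ih f (fun i => g (i + 1)) n
    have i3 := ih (fun i => f (i + 1)) (fun i => g (i + 1)) n
    have e3 : (fun m n => (fun i => f (i + 1)) (m + n)) = (fun m n => f (m + (n + 1))) := by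
      funext a b
      show f (a + b + 1) = f (a + (b + 1))
      congr 1 <;> omega
    have e4 : (fun m n => (fun i => g (i + 1)) (m + n)) = (fun m n => g (m + (n + 1))) := by
      funext a b
      show g (a + b + 1) = g (a + (b + 1))
      congr 1 <;> omega
    rw [e3] at i1 i3
    rw [e4] at i2 i3
    rw [i1, i2, i3]

end HurwitzAux

/-- `d*(f)(m)(n) = f(m+n)` is multiplicative from the `lam`-Hurwitz algebra
`ℕ → A` to the `lam`-Hurwitz algebra of sequences valued in the `lam`-Hurwitz algebra
`ℕ → A`. -/
theorem dstar_multiplicative_hurwitz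
    {k A : Type*} [CommRing k] [Ring A] [Algebra k A] (lam : k) (f g : ℕ → A) :
    (fun m n => hurwitzWith lam (· * ·) f g (m + n)) =
      hurwitzWith lam (hurwitzWith lam (· * ·))
        (fun m n => f (m + n)) (fun m n => g (m + n)) := by
  funext m n
  exact HurwitzAux.key_ind lam m f g n
end

section
/- Let R be a commutative semiring, λ ∈ R, f, g : ℕ → R, and n ∈ ℕ. Let X be a finite set with n elements (e.g., Fin n). Then Σ_{(U,V) : U ∪ V = X} λ^{|U ∩ V|} · f(|U|) · g(|V|) = Σ_{r+s+t=n} (n!/(r!·s!·t!)) · λ^t · f(r+t) · g(s+t), where the left sum is over all pairs (U,V) of subsets of X with U ∪ V = X, and the right sum is over all triples (r,s,t) of natural numbers with r+s+t = n. -/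
open Finset

private lemma mult_aux (n r t : ℕ) (h : r + t ≤ n) :
    n.factorial / (r.factorial * (n - r - t).factorial * t.factorial)
      = n.choose t * (n - t).choose r := by
  have ht : t ≤ n := le_trans (Nat.le_add_left _ _) h
  have hr : r ≤ n - t := Nat.le_sub_of_add_le h
  have hs : n - r - t = n - t - r := by omega
  have h1 := Nat.choose_mul_factorial_mul_factorial ht
  have h2 := Nat.choose_mul_factorial_mul_factorial hr
  refine Nat.div_eq_of_eq_mul_left ?_ ?_
  · positivity
  · rw [hs, ← h1, ← h2]; ring

private lemma triangle_swap {M : Type*} [AddCommMonoid M] (n : ℕ) (h : ℕ → ℕ → M) :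
    ∑ t ∈ range (n + 1), ∑ r ∈ range (n - t + 1), h t r
      = ∑ r ∈ range (n + 1), ∑ t ∈ range (n - r + 1), h t r := by
  rw [Finset.sum_sigma', Finset.sum_sigma']
  refine Finset.sum_nbij' (fun x => ⟨x.2, x.1⟩) (fun x => ⟨x.2, x.1⟩) ?_ ?_ ?_ ?_ ?_
  · rintro ⟨a, b⟩ hx
    simp only [Finset.mem_sigma, Finset.mem_range] at hx ⊢
    omega
  · rintro ⟨a, b⟩ hx
    simp only [Finset.mem_sigma, Finset.mem_range] at hx ⊢
    omega
  · rintro ⟨a, b⟩ _; rfl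
  · rintro ⟨a, b⟩ _; rfl
  · rintro ⟨a, b⟩ _; rfl

/-- the cardinality-level identity `#(F ⊗^L G) = #F ·^λ #G`:
`Σ_{U ∪ V = X} λ^{|U∩V|} f(|U|) g(|V|) = Σ_{r+s+t=n} (n!/(r!s!t!)) λ^t f(r+t) g(s+t)`
for a finite set `X` with `n` elements. -/
theorem covers_sum_eq_hurwitz_sum
    {R : Type*} [CommSemiring R] (lam : R) (f g : ℕ → R)
    {X : Type*} [Fintype X] [DecidableEq X] (n : ℕ) (hn : Fintype.card X = n) :
    ∑ p ∈ Finset.univ.filter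
        (fun p : Finset X × Finset X => p.1 ∪ p.2 = Finset.univ),
      lam ^ (p.1 ∩ p.2).card * f p.1.card * g p.2.card =
    ∑ p ∈ Finset.HasAntidiagonal.antidiagonal n, ∑ q ∈ Finset.HasAntidiagonal.antidiagonal p.2,
      ((Nat.factorial n /
          (Nat.factorial p.1 * Nat.factorial q.1 * Nat.factorial q.2) : ℕ) : R) *
        lam ^ q.2 * f (p.1 + q.2) * g (q.1 + q.2) := by
  classical
  -- Step 1: reindex the left side by pairs (T, A) with T = U ∩ V, A = U \ V ⊆ Tᶜ.
  have hstep1 :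
      ∑ p ∈ Finset.univ.filter
          (fun p : Finset X × Finset X => p.1 ∪ p.2 = Finset.univ),
        lam ^ (p.1 ∩ p.2).card * f p.1.card * g p.2.card
      = ∑ x ∈ (Finset.univ : Finset (Finset X)).sigma (fun T => Tᶜ.powerset),
          lam ^ x.1.card * f (x.1.card + x.2.card) * g (n - x.2.card) := by
    refine Finset.sum_nbij' (fun p => ⟨p.1 ∩ p.2, p.1 \ p.2⟩)
      (fun x => (x.1 ∪ x.2, x.2ᶜ)) ?_ ?_ ?_ ?_ ?_
    · intro p hp
      simp only [Finset.mem_filter, Finset.mem_univ, true_and] at hp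
      simp only [Finset.mem_sigma, Finset.mem_univ, Finset.mem_powerset, true_and]
      intro a ha
      simp only [Finset.mem_sdiff] at ha
      simp only [Finset.mem_compl, Finset.mem_inter]
      tauto
    · intro x hx
      simp only [Finset.mem_filter, Finset.mem_univ, true_and]
      rw [Finset.union_assoc, Finset.union_compl]
      exact Finset.union_eq_right.mpr (Finset.subset_univ _)
    · intro p hp
      simp only [Finset.mem_filter, Finset.mem_univ, true_and] at hp
      have hcov : ∀ a : X, a ∈ p.1 ∨ a ∈ p.2 := by
        intro a
        have : a ∈ p.1 ∪ p.2 := hp ▸ Finset.mem_univ a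
        simpa [Finset.mem_union] using this
      have h1 : p.1 ∩ p.2 ∪ p.1 \ p.2 = p.1 := by
        ext a; simp only [Finset.mem_union, Finset.mem_inter, Finset.mem_sdiff]; tauto
      have h2 : (p.1 \ p.2)ᶜ = p.2 := by
        ext a
        simp only [Finset.mem_compl, Finset.mem_sdiff, not_and, not_not]
        have := hcov a; tauto
      simp [h1, h2]
    · intro x hx
      simp only [Finset.mem_sigma, Finset.mem_univ, Finset.mem_powerset, true_and] at hx
      have hd : ∀ a : X, a ∈ x.2 → a ∉ x.1 := by
        intro a ha
        have := hx ha
        simpa [Finset.mem_compl] using this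
      have h1 : (x.1 ∪ x.2) ∩ x.2ᶜ = x.1 := by
        ext a
        simp only [Finset.mem_inter, Finset.mem_union, Finset.mem_compl]
        have := hd a; tauto
      have h2 : (x.1 ∪ x.2) \ x.2ᶜ = x.2 := by
        ext a
        simp only [Finset.mem_sdiff, Finset.mem_union, Finset.mem_compl, not_not]
        tauto
      exact Sigma.ext (by simp [h1]) (by simp [h1, h2])
    · intro p hp
      simp only [Finset.mem_filter, Finset.mem_univ, true_and] at hp
      have hcov : ∀ a : X, a ∈ p.1 ∨ a ∈ p.2 := by
        intro a
        have : a ∈ p.1 ∪ p.2 := hp ▸ Finset.mem_univ a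
        simpa [Finset.mem_union] using this
      have h2 : (p.1 \ p.2)ᶜ = p.2 := by
        ext a
        simp only [Finset.mem_compl, Finset.mem_sdiff, not_and, not_not]
        have := hcov a; tauto
      have hcard1 : (p.1 ∩ p.2).card + (p.1 \ p.2).card = p.1.card :=
        Finset.card_inter_add_card_sdiff p.1 p.2
      have hcard2 : n - (p.1 \ p.2).card = p.2.card := by
        have h3 := Finset.card_compl (p.1 \ p.2)
        rw [h2, hn] at h3
        omega
      rw [hcard1, hcard2]
  -- Step 2: group by cardinalities.
  have hstep2 :
      ∑ T : Finset X, ∑ A ∈ Tᶜ.powerset,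
          lam ^ T.card * f (T.card + A.card) * g (n - A.card)
      = ∑ t ∈ range (n + 1), ∑ r ∈ range (n - t + 1),
          (n.choose t * (n - t).choose r) •
            (lam ^ t * f (t + r) * g (n - r)) := by
    have huniv : (Finset.univ : Finset (Finset X)) = (Finset.univ : Finset X).powerset :=
      (Finset.powerset_univ).symm
    rw [huniv, Finset.sum_powerset]
    have hcu : (Finset.univ : Finset X).card = n := by simpa using hn
    rw [hcu]
    refine Finset.sum_congr rfl ?_
    intro t ht
    rw [Finset.mem_range] at ht
    have step : ∀ T ∈ Finset.powersetCard t (Finset.univ : Finset X),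
        (∑ A ∈ Tᶜ.powerset, lam ^ T.card * f (T.card + A.card) * g (n - A.card))
        = ∑ r ∈ range (n - t + 1),
            ((n - t).choose r) • (lam ^ t * f (t + r) * g (n - r)) := by
      intro T hT
      rw [Finset.mem_powersetCard] at hT
      have hTc : T.card = t := hT.2
      have hTcc : Tᶜ.card = n - t := by rw [Finset.card_compl, hn, hTc]
      rw [Finset.sum_powerset, hTcc]
      refine Finset.sum_congr rfl ?_
      intro r hr
      have : ∀ A ∈ Finset.powersetCard r Tᶜ,
          lam ^ T.card * f (T.card + A.card) * g (n - A.card)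
            = lam ^ t * f (t + r) * g (n - r) := by
        intro A hA
        rw [Finset.mem_powersetCard] at hA
        rw [hTc, hA.2]
      rw [Finset.sum_congr rfl this, Finset.sum_const, Finset.card_powersetCard, hTcc]
    rw [Finset.sum_congr rfl step, Finset.sum_const, Finset.card_powersetCard, hcu,
      Finset.smul_sum]
    refine Finset.sum_congr rfl fun r _ => ?_
    rw [smul_smul]
  -- Step 3: rewrite the right side.
  have hRHS :
      (∑ p ∈ Finset.HasAntidiagonal.antidiagonal n, ∑ q ∈ Finset.HasAntidiagonal.antidiagonal p.2,
        ((Nat.factorial n /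
            (Nat.factorial p.1 * Nat.factorial q.1 * Nat.factorial q.2) : ℕ) : R) *
          lam ^ q.2 * f (p.1 + q.2) * g (q.1 + q.2))
      = ∑ r ∈ range (n + 1), ∑ t ∈ range (n - r + 1),
          (n.choose t * (n - t).choose r) •
            (lam ^ t * f (t + r) * g (n - r)) := by
    rw [Finset.Nat.sum_antidiagonal_eq_sum_range_succ_mk]
    refine Finset.sum_congr rfl ?_
    intro r hr
    rw [Finset.mem_range] at hr
    rw [Finset.Nat.sum_antidiagonal_eq_sum_range_succ_mk, ← Finset.sum_range_reflect]
    refine Finset.sum_congr rfl ?_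
    intro t ht
    rw [Finset.mem_range] at ht
    simp only
    have h1 : (r, n - r).2 + 1 - 1 - t = n - r - t := by omega
    rw [h1]
    have h2 : (r, n - r).2 - (n - r - t) = t := by simp only; omega
    rw [h2]
    have h4 : n.factorial / ((r, n - r).1.factorial *
        (n - r - t).factorial * t.factorial)
        = n.choose t * (n - t).choose r := mult_aux n r t (by omega)
    rw [h4, nsmul_eq_mul]
    have h5 : n - r - t + t = n - r := by omega
    rw [h5]
    push_cast
    ring_nf
  rw [hstep1, Finset.sum_sigma, hstep2, triangle_swap, hRHS]
end

section
/- Let q be a prime power, F a finite field with q elements, and X an F-vector space of finite dimension n (e.g., Fⁿ). Let λ ∈ ℚ and f, g : ℕ → ℚ. Then Σ_{(V,U) : V ≤ U} λ^{dim U − dim V} · f(dim U) · g(n − dim V) = Σ_{r+s+t=n} (φ_n(q)/(φ_r(q)·φ_s(q)·φ_t(q))) · λ^t · f(r+t) · g(s+t), where the left sum is over all pairs of F-linear subspaces V ≤ U of X, the right sum is over all triples (r,s,t) of natural numbers with r+s+t = n, and φ_m(q) = (q^m − 1)(q^{m−1} − 1)···(q − 1) with φ_0(q) = 1. -/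
open Finset

/-- `φ_m(q) = (q^m − 1)(q^{m−1} − 1)···(q − 1)`, with `φ_0(q) = 1`, computed in ℚ. -/
def phiQ (q : ℚ) (m : ℕ) : ℚ := ∏ i ∈ Finset.range m, (q ^ (i + 1) - 1)

lemma phiQ_zero (q : ℚ) : phiQ q 0 = 1 := by simp [phiQ]


lemma phiQ_ne_zero {q : ℚ} (hq : 2 ≤ q) (m : ℕ) : phiQ q m ≠ 0 := by
  refine Finset.prod_ne_zero_iff.2 fun i _ => ?_
  have h1 : (2:ℚ) ≤ q ^ (i+1) := le_trans hq (le_self_pow₀ (by linarith) (Nat.succ_ne_zero i))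
  linarith

lemma phiQ_split {q : ℚ} {k m : ℕ} (hk : k ≤ m) :
    phiQ q m = phiQ q (m - k) * ∏ i ∈ range k, (q ^ (m - i) - 1) := by
  have h1 : ∏ i ∈ range k, (q ^ (m - i) - 1) =
      ∏ i ∈ range k, (q ^ ((m - k) + i + 1) - 1) := by
    rw [← Finset.prod_range_reflect (fun i => q ^ ((m-k) + i + 1) - 1) k]
    refine Finset.prod_congr rfl fun i hi => ?_
    rw [Finset.mem_range] at hi
    congr 2
    omega
  rw [h1, phiQ, phiQ, ← Finset.prod_range_add (fun i => q ^ (i+1) - 1) (m-k) k]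
  rw [Nat.sub_add_cancel hk]

/-- Cast of the counting product `∏ (q^m - q^i)` into `ℚ`. -/
lemma cast_prod_pow_sub {q : ℕ} (hq : 1 ≤ q) {k m : ℕ} (hk : k ≤ m) :
    ((∏ i ∈ range k, (q ^ m - q ^ i) : ℕ) : ℚ) =
      (∏ i ∈ range k, (q:ℚ) ^ i) * ∏ i ∈ range k, ((q:ℚ) ^ (m - i) - 1) := by
  rw [Nat.cast_prod, ← Finset.prod_mul_distrib]
  refine Finset.prod_congr rfl fun i hi => ?_
  rw [Finset.mem_range] at hi
  have hle : q ^ i ≤ q ^ m := Nat.pow_le_pow_right hq (by omega)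
  rw [Nat.cast_sub hle]
  push_cast
  rw [mul_sub, mul_one, ← pow_add]
  congr 2
  omega



section CountB

variable {F : Type*} [Field F] [Fintype F]
variable {X : Type*} [AddCommGroup X] [Module F X] [FiniteDimensional F X]

/-- Over each `k`-dimensional subspace `U`, the independent `k`-tuples spanning `U`
are exactly the independent `k`-tuples inside `U`. -/
noncomputable def fiberEquiv (k : ℕ) (U : {U : Submodule F X // Module.finrank F U = k}) :
    {s : {s : Fin k → X // LinearIndependent F s} //
        Submodule.span F (Set.range s.1) = U.1} ≃
      {t : Fin k → U.1 // LinearIndependent F t} where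
  toFun p := ⟨fun i => ⟨p.1.1 i, by
      have h := Submodule.subset_span (R := F) (Set.mem_range_self (f := p.1.1) i)
      rw [p.2] at h; exact h⟩, by
    apply LinearIndependent.of_comp U.1.subtype
    exact p.1.2⟩
  invFun t := ⟨⟨fun i => (t.1 i : X), t.2.map' U.1.subtype (Submodule.ker_subtype U.1)⟩, by
    have hli : LinearIndependent F (fun i => ((t.1 i : X))) :=
      t.2.map' U.1.subtype (Submodule.ker_subtype U.1)
    refine Submodule.eq_of_le_of_finrank_eq ?_ ?_
    · rw [Submodule.span_le]
      rintro x ⟨i, rfl⟩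
      exact (t.1 i).2
    · show Module.finrank F (Submodule.span F (Set.range (fun i => ((t.1 i : X))))) = _
      rw [finrank_span_eq_card hli, Fintype.card_fin, U.2]⟩
  left_inv p := Subtype.ext (Subtype.ext rfl)
  right_inv t := Subtype.ext rfl

lemma grassmann_card_mul (q : ℕ) (hF : Fintype.card F = q) {k : ℕ}
    (hk : k ≤ Module.finrank F X) :
    (Nat.card {U : Submodule F X // Module.finrank F U = k}) *
        ∏ i ∈ range k, (q ^ k - q ^ i) =
      ∏ i ∈ range k, (q ^ Module.finrank F X - q ^ i) := by
  haveI : Finite X := Finite.of_equiv _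
    ((Module.finBasis F X).equivFun.toEquiv).symm
  haveI : Finite (Submodule F X) :=
    Finite.of_injective _ (SetLike.coe_injective (A := Submodule F X))
  classical
  haveI := Fintype.ofFinite X
  haveI := Fintype.ofFinite (Submodule F X)
  subst hF
  -- count linearly independent k-tuples in X
  have hbig := card_linearIndependent (K := F) (V := X) hk
  -- fiber the tuples over the span
  have hfib : ∀ U : {U : Submodule F X // Module.finrank F U = k},
      Nat.card {s : {s : Fin k → X // LinearIndependent F s} //
        Submodule.span F (Set.range s.1) = U.1} =
      ∏ i ∈ range k, (Fintype.card F ^ k - Fintype.card F ^ i) := by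
    intro U
    rw [Nat.card_congr (fiberEquiv k U)]
    have := card_linearIndependent (K := F) (V := U.1) (k := k) (by rw [U.2])
    rw [this, U.2,
      Fin.prod_univ_eq_prod_range (fun i => Fintype.card F ^ k - Fintype.card F ^ i) k]
  have hsig := Nat.card_congr
    (Equiv.sigmaFiberEquiv
      (fun s : {s : Fin k → X // LinearIndependent F s} =>
        (⟨Submodule.span F (Set.range s.1), by
          rw [finrank_span_eq_card s.2, Fintype.card_fin]⟩ :
          {U : Submodule F X // Module.finrank F U = k})))
  rw [← hsig] at hbig
  rw [Nat.card_eq_fintype_card, Fintype.card_sigma] at hbig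
  have hterm : ∀ U : {U : Submodule F X // Module.finrank F U = k},
      Fintype.card {s : {s : Fin k → X // LinearIndependent F s} //
          (⟨Submodule.span F (Set.range s.1), by
            rw [finrank_span_eq_card s.2, Fintype.card_fin]⟩ :
            {U : Submodule F X // Module.finrank F U = k}) = U} =
        ∏ i ∈ range k, (Fintype.card F ^ k - Fintype.card F ^ i) := by
    intro U
    rw [← Nat.card_eq_fintype_card, ← hfib U]
    apply Nat.card_congr
    apply Equiv.subtypeEquivRight
    intro s
    constructor
    · intro h; exact congrArg Subtype.val h
    · intro h; exact Subtype.ext h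
  rw [Finset.sum_congr rfl (fun U _ => hterm U), Finset.sum_const, smul_eq_mul] at hbig
  rw [Nat.card_eq_fintype_card, Fintype.card, hbig,
    Fin.prod_univ_eq_prod_range
      (fun i => Fintype.card F ^ Module.finrank F X - Fintype.card F ^ i) k]

end CountB

section CountC

variable (q : ℕ)
variable {F : Type*} [Field F] [Fintype F]
variable {X : Type*} [AddCommGroup X] [Module F X] [FiniteDimensional F X]



lemma grassmannQ (hF : Fintype.card F = q) {k : ℕ} (hk : k ≤ Module.finrank F X) :
    (Nat.card {U : Submodule F X // Module.finrank F U = k} : ℚ) *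
        (phiQ q k * phiQ q (Module.finrank F X - k)) =
      phiQ q (Module.finrank F X) := by
  have hq2 : 2 ≤ q := by
    have := Fintype.one_lt_card (α := F)
    omega
  have hq1 : 1 ≤ q := by omega
  have hq2' : (2:ℚ) ≤ (q:ℚ) := by exact_mod_cast hq2
  set n := Module.finrank F X with hn
  have hP : (∏ i ∈ range k, (q:ℚ) ^ i) ≠ 0 :=
    Finset.prod_ne_zero_iff.2 fun i _ => pow_ne_zero _ (by positivity)
  have hA : phiQ (q:ℚ) k = ∏ i ∈ range k, ((q:ℚ) ^ (k - i) - 1) := by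
    have := phiQ_split (q := (q:ℚ)) (le_refl k)
    simpa [phiQ_zero] using this
  have key : (Nat.card {U : Submodule F X // Module.finrank F U = k} : ℚ) *
      phiQ (q:ℚ) k = ∏ i ∈ range k, ((q:ℚ) ^ (n - i) - 1) := by
    have hc := congrArg (Nat.cast (R := ℚ)) (grassmann_card_mul q hF hk)
    rw [Nat.cast_mul, cast_prod_pow_sub hq1 (le_refl k), cast_prod_pow_sub hq1 hk] at hc
    apply mul_left_cancel₀ hP
    rw [hA]
    calc (∏ i ∈ range k, (q:ℚ) ^ i) *
          ((Nat.card {U : Submodule F X // Module.finrank F U = k} : ℚ) *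
            ∏ i ∈ range k, ((q:ℚ) ^ (k - i) - 1))
        = (Nat.card {U : Submodule F X // Module.finrank F U = k} : ℚ) *
          ((∏ i ∈ range k, (q:ℚ) ^ i) * ∏ i ∈ range k, ((q:ℚ) ^ (k - i) - 1)) := by ring
      _ = (∏ i ∈ range k, (q:ℚ) ^ i) * ∏ i ∈ range k, ((q:ℚ) ^ (n - i) - 1) := hc
  rw [phiQ_split (q := (q:ℚ)) hk, ← key]
  ring

/-- subspaces of `U` of dimension `j`, as submodules of `X`. -/
noncomputable def subEquiv (U : Submodule F X) (j : ℕ) :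
    {V : Submodule F X // V ≤ U ∧ Module.finrank F V = j} ≃
      {W : Submodule F U // Module.finrank F W = j} where
  toFun V := ⟨Submodule.comap U.subtype V.1, by
    rw [(Submodule.comapSubtypeEquivOfLe V.2.1).finrank_eq, V.2.2]⟩
  invFun W := ⟨Submodule.map U.subtype W.1,
    ⟨Submodule.map_subtype_le U W.1,
      (Submodule.finrank_map_subtype_eq U W.1).trans W.2⟩⟩
  left_inv V := Subtype.ext (by
    show Submodule.map U.subtype (Submodule.comap U.subtype V.1) = V.1
    rw [Submodule.map_comap_subtype, inf_eq_right.2 V.2.1])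
  right_inv W := Subtype.ext (by
    show Submodule.comap U.subtype (Submodule.map U.subtype W.1) = W.1
    rw [Submodule.comap_map_eq, Submodule.ker_subtype, sup_bot_eq])

lemma fiberQ (hF : Fintype.card F = q) (U : Submodule F X) {j : ℕ}
    (hj : j ≤ Module.finrank F U) :
    (Nat.card {V : Submodule F X // V ≤ U ∧ Module.finrank F V = j} : ℚ) *
        (phiQ q j * phiQ q (Module.finrank F U - j)) =
      phiQ q (Module.finrank F U) := by
  rw [Nat.card_congr (subEquiv U j)]
  exact grassmannQ q hF hj

end CountC


set_option maxHeartbeats 1000000 in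
/-- the dimension-sequence identity for the weighted tensor product of
charades: for an `n`-dimensional vector space `X` over a finite field `F` with `q`
elements,
`Σ_{V ≤ U} λ^{dim U − dim V} f(dim U) g(n − dim V)
   = Σ_{r+s+t=n} (φ_n(q)/(φ_r(q)φ_s(q)φ_t(q))) λ^t f(r+t) g(s+t)`. -/
theorem subspace_sum_eq_q_hurwitz_sum
    (q : ℕ) (hq : IsPrimePow q)
    {F : Type*} [Field F] [Fintype F] (hF : Fintype.card F = q)
    {X : Type*} [AddCommGroup X] [Module F X] [FiniteDimensional F X]
    (n : ℕ) (hn : Module.finrank F X = n)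
    (lam : ℚ) (f g : ℕ → ℚ) :
    (∑ᶠ (U : Submodule F X) (V : Submodule F X) (_ : V ≤ U),
        lam ^ (Module.finrank F U - Module.finrank F V) *
          f (Module.finrank F U) * g (n - Module.finrank F V)) =
      ∑ p ∈ Finset.HasAntidiagonal.antidiagonal n, ∑ r ∈ Finset.HasAntidiagonal.antidiagonal p.2,
        phiQ (q : ℚ) n / (phiQ (q : ℚ) p.1 * phiQ (q : ℚ) r.1 * phiQ (q : ℚ) r.2) *
          lam ^ r.2 * f (p.1 + r.2) * g (r.1 + r.2) := by
  classical
  haveI : Finite X := Finite.of_equiv _ ((Module.finBasis F X).equivFun.toEquiv).symm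
  haveI : Finite (Submodule F X) :=
    Finite.of_injective _ (SetLike.coe_injective (A := Submodule F X))
  haveI := Fintype.ofFinite (Submodule F X)
  have hq2 : (2:ℚ) ≤ (q:ℚ) := by
    have h1 := Fintype.one_lt_card (α := F)
    rw [hF] at h1
    exact_mod_cast h1
  have hphi : ∀ m, phiQ (q:ℚ) m ≠ 0 := phiQ_ne_zero hq2
  subst hn
  set n := Module.finrank F X with hn
  -- abbreviation for the summand
  set T : Submodule F X → Submodule F X → ℚ := fun U V =>
    lam ^ (Module.finrank F U - Module.finrank F V) *
      f (Module.finrank F U) * g (n - Module.finrank F V) with hT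
  -- Step A : turn the finsum into finset sums
  have stepA : (∑ᶠ (U : Submodule F X) (V : Submodule F X) (_ : V ≤ U), T U V)
      = ∑ U : Submodule F X, ∑ V ∈ univ.filter (fun V => V ≤ U), T U V := by
    rw [finsum_eq_sum_of_fintype]
    refine Finset.sum_congr rfl fun U _ => ?_
    rw [finsum_eq_sum_of_fintype, Finset.sum_filter]
    exact Finset.sum_congr rfl fun V _ => finsum_eq_if
  -- Step B : inner fiberwise count
  have stepB : ∀ U : Submodule F X,
      ∑ V ∈ univ.filter (fun V => V ≤ U), T U V
      = ∑ j ∈ range (Module.finrank F U + 1),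
          phiQ (q:ℚ) (Module.finrank F U) /
              (phiQ (q:ℚ) j * phiQ (q:ℚ) (Module.finrank F U - j)) *
            lam ^ (Module.finrank F U - j) * f (Module.finrank F U) * g (n - j) := by
    intro U
    rw [← Finset.sum_fiberwise_of_maps_to (g := fun V : Submodule F X => Module.finrank F V)
      (fun V hV => mem_range_succ_iff.2 (Submodule.finrank_mono (mem_filter.1 hV).2))
      (fun V => T U V)]
    refine Finset.sum_congr rfl fun j hj => ?_
    rw [mem_range_succ_iff] at hj
    have hconst : ∀ V ∈ (univ.filter (fun V => V ≤ U)).filter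
        (fun V : Submodule F X => Module.finrank F V = j),
        T U V = lam ^ (Module.finrank F U - j) * f (Module.finrank F U) * g (n - j) := by
      intro V hV
      rw [mem_filter] at hV
      rw [hT]
      simp only
      rw [hV.2]
    rw [Finset.sum_congr rfl hconst, Finset.sum_const, nsmul_eq_mul]
    have hcard : (((univ.filter (fun V => V ≤ U)).filter
          (fun V : Submodule F X => Module.finrank F V = j)).card : ℚ)
        = phiQ (q:ℚ) (Module.finrank F U) /
            (phiQ (q:ℚ) j * phiQ (q:ℚ) (Module.finrank F U - j)) := by
      rw [Finset.filter_filter]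
      rw [eq_div_iff (mul_ne_zero (hphi j) (hphi _))]
      have := fiberQ q hF U hj
      rw [← this, Nat.card_eq_fintype_card, Fintype.card_subtype]
    rw [hcard]
    ring
  -- Step C : outer fiberwise count
  have stepC : ∑ U : Submodule F X, ∑ V ∈ univ.filter (fun V => V ≤ U), T U V
      = ∑ k ∈ range (n + 1), ∑ j ∈ range (k + 1),
          phiQ (q:ℚ) n / (phiQ (q:ℚ) k * phiQ (q:ℚ) (n - k)) *
            (phiQ (q:ℚ) k / (phiQ (q:ℚ) j * phiQ (q:ℚ) (k - j))) *
            lam ^ (k - j) * f k * g (n - j) := by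
    rw [Finset.sum_congr rfl fun U _ => stepB U]
    rw [← Finset.sum_fiberwise_of_maps_to (g := fun U : Submodule F X => Module.finrank F U)
      (fun U _ => mem_range_succ_iff.2 (Submodule.finrank_le U)) _]
    refine Finset.sum_congr rfl fun k hk => ?_
    rw [mem_range_succ_iff] at hk
    have hconst : ∀ U ∈ univ.filter (fun U : Submodule F X => Module.finrank F U = k),
        (∑ j ∈ range (Module.finrank F U + 1),
          phiQ (q:ℚ) (Module.finrank F U) /
              (phiQ (q:ℚ) j * phiQ (q:ℚ) (Module.finrank F U - j)) *
            lam ^ (Module.finrank F U - j) * f (Module.finrank F U) * g (n - j))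
        = ∑ j ∈ range (k + 1),
            phiQ (q:ℚ) k / (phiQ (q:ℚ) j * phiQ (q:ℚ) (k - j)) *
              lam ^ (k - j) * f k * g (n - j) := by
      intro U hU
      rw [(mem_filter.1 hU).2]
    rw [Finset.sum_congr rfl hconst, Finset.sum_const, nsmul_eq_mul, Finset.mul_sum]
    have hcard : ((univ.filter (fun U : Submodule F X => Module.finrank F U = k)).card : ℚ)
        = phiQ (q:ℚ) n / (phiQ (q:ℚ) k * phiQ (q:ℚ) (n - k)) := by
      rw [eq_div_iff (mul_ne_zero (hphi k) (hphi _))]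
      have := grassmannQ q hF (X := X) hk
      rw [← this, Nat.card_eq_fintype_card, Fintype.card_subtype]
    rw [hcard]
    refine Finset.sum_congr rfl fun j hj => ?_
    ring
  rw [stepA, stepC]
  -- Step D : reindex
  rw [Finset.sum_sigma', Finset.sum_sigma']
  refine Finset.sum_nbij' (i := fun x => ⟨(x.2, n - x.2), (n - x.1, x.1 - x.2)⟩)
    (j := fun y => ⟨y.1.1 + y.2.2, y.1.1⟩) ?_ ?_ ?_ ?_ ?_
  · rintro ⟨k, j⟩ hx
    simp only [mem_sigma, mem_range] at hx
    simp only [mem_sigma, Finset.HasAntidiagonal.mem_antidiagonal]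
    omega
  · rintro ⟨p, r⟩ hy
    simp only [mem_sigma, Finset.HasAntidiagonal.mem_antidiagonal] at hy
    simp only [mem_sigma, mem_range]
    omega
  · rintro ⟨k, j⟩ hx
    simp only [mem_sigma, mem_range] at hx
    dsimp only
    have h1 : j + (k - j) = k := by omega
    rw [h1]
  · rintro ⟨⟨p1, p2⟩, r1, r2⟩ hy
    simp only [mem_sigma, Finset.HasAntidiagonal.mem_antidiagonal] at hy
    dsimp only
    have e1 : n - p1 = p2 := by omega
    have e2 : n - (p1 + r2) = r1 := by omega
    have e3 : p1 + r2 - p1 = r2 := by omega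
    rw [e1, e2, e3]
  · rintro ⟨k, j⟩ hx
    simp only [mem_sigma, mem_range] at hx
    dsimp only
    have h1 : j + (k - j) = k := by omega
    have h2 : n - k + (k - j) = n - j := by omega
    rw [h1, h2]
    have hcoef : phiQ (q:ℚ) n / (phiQ (q:ℚ) k * phiQ (q:ℚ) (n - k)) *
        (phiQ (q:ℚ) k / (phiQ (q:ℚ) j * phiQ (q:ℚ) (k - j)))
        = phiQ (q:ℚ) n / (phiQ (q:ℚ) j * phiQ (q:ℚ) (n - k) * phiQ (q:ℚ) (k - j)) := by
      rw [div_mul_div_comm, div_eq_div_iff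
        (mul_ne_zero (mul_ne_zero (hphi k) (hphi _)) (mul_ne_zero (hphi j) (hphi _)))
        (mul_ne_zero (mul_ne_zero (hphi j) (hphi _)) (hphi _))]
      ring
    rw [hcoef]
end
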